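/- Suppose condition (I⁰_ρ) holds for some ρ > 0: there exists a finite positive Borel measure dA^ρ on [0,1], with α^ρ[u] := ∫₀¹ u(t) dA^ρ(t) and 𝒦^ρ(s) := ∫₀¹ k(t,s) dA^ρ(t), such that α^ρ[γ] < 1, H[u] ≥ α^ρ[u] for every u ∈ K with min_{t∈[0,1]} u(t) = ρ, and f_{ρ,ρ/c} · inf_{t∈[0,1]} { γ(t)/(1−α^ρ[γ]) · ∫₀¹ 𝒦^ρ(s) g(s) ds + ∫₀¹ k(t,s) g(s) ds } > 1, where f_{ρ,ρ/c} := ess inf { f(t,u)/ρ : 0 ≤ t ≤ 1, ρ ≤ u ≤ ρ/c }. Then for every u ∈ K with min_{t∈[0,1]} u(t) = ρ and every real λ ≥ 0 one has u ≠ Tu + λ·𝟙, where 𝟙 denotes the constant function equal to 1 on [0,1]. -/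

import Mathlib

open MeasureTheory Set

/-- Supremum norm of `u` on `[0,1]`. -/
noncomputable def nrm (u : ℝ → ℝ) : ℝ := sSup ((fun t => |u t|) '' Icc (0:ℝ) 1)

/-- Minimum (infimum) of `u` on `[a,b]`. -/
noncomputable def minOnIcc (u : ℝ → ℝ) (a b : ℝ) : ℝ := sInf (u '' Icc a b)

/-- The perturbed Hammerstein operator `Tu(t) = γ(t)H[u] + ∫₀¹ k(t,s)g(s)f(s,u(s)) ds`. -/
noncomputable def Tham (k : ℝ → ℝ → ℝ) (g : ℝ → ℝ) (f : ℝ → ℝ → ℝ) (γ : ℝ → ℝ)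
    (H : (ℝ → ℝ) → ℝ) (u : ℝ → ℝ) (t : ℝ) : ℝ :=
  γ t * H u + ∫ s in (0:ℝ)..1, k t s * g s * f s (u s)

/-- Condition (I⁰_ρ) for strongly positive kernels. -/
def CondI0 (k : ℝ → ℝ → ℝ) (g : ℝ → ℝ) (f : ℝ → ℝ → ℝ) (γ : ℝ → ℝ)
    (H : (ℝ → ℝ) → ℝ) (K : Set (ℝ → ℝ)) (c ρ : ℝ) : Prop :=
  ∃ μA : Measure ℝ, IsFiniteMeasure μA ∧ μA ((Icc (0:ℝ) 1)ᶜ) = 0 ∧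
    (∫ t, γ t ∂μA) < 1 ∧
    (∀ u ∈ K, minOnIcc u 0 1 = ρ → (∫ t, u t ∂μA) ≤ H u) ∧
    ∃ fb : ℝ,
      (∀ᵐ t ∂(volume.restrict (Icc (0:ℝ) 1)), ∀ u : ℝ, ρ ≤ u → u ≤ ρ / c → fb * ρ ≤ f t u) ∧
      1 < fb * sInf ((fun t => γ t / (1 - ∫ t', γ t' ∂μA) *
          (∫ s in (0:ℝ)..1, (∫ t', k t' s ∂μA) * g s) +
          ∫ s in (0:ℝ)..1, k t s * g s) '' Icc (0:ℝ) 1)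

/-!
If `u = Tu + λ` with `min u = ρ`, then `ρ ≤ u ≤ ρ / c` on `[0,1]`, so `f(s, u(s)) ≥ ρ f_{ρ,ρ/c}`.
Integrating the equation against `dA^ρ` and exchanging the order of integration gives
`α[u] ≥ α[γ] H[u] + ∫ 𝒦 g f(·, u)`; together with `H[u] ≥ α[u]` this bounds `H[u]` below by
`∫ 𝒦 g f(·, u) / (1 - α[γ])`. Substituting back into the equation yields, for every `t`,
`u(t) ≥ ρ f_{ρ,ρ/c} (γ(t) / (1 - α[γ]) ∫ 𝒦 g + ∫ k(t, ·) g)`, hence `ρ = min u > ρ` by (I⁰_ρ).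
-/

open Filter Function

theorem minOnIcc_le_of_continuousOn {u : ℝ → ℝ} {a b t : ℝ} (hu : ContinuousOn u (Icc a b))
    (ht : t ∈ Icc a b) : minOnIcc u a b ≤ u t :=
  csInf_le (isCompact_Icc.image_of_continuousOn hu).bddBelow (mem_image_of_mem u ht)

theorem le_minOnIcc {u : ℝ → ℝ} {a b m : ℝ} (hab : a ≤ b) (h : ∀ t ∈ Icc a b, m ≤ u t) :
    m ≤ minOnIcc u a b :=
  le_csInf ((nonempty_Icc.2 hab).image u) (forall_mem_image.2 h)

theorem abs_le_nrm_of_continuousOn {u : ℝ → ℝ} {t : ℝ} (hu : ContinuousOn u (Icc 0 1))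
    (ht : t ∈ Icc (0:ℝ) 1) : |u t| ≤ nrm u :=
  le_csSup (isCompact_Icc.image_of_continuousOn hu.abs).bddAbove (mem_image_of_mem _ ht)

theorem nrm_nonneg (u : ℝ → ℝ) : 0 ≤ nrm u :=
  Real.sSup_nonneg (forall_mem_image.2 fun _ _ => abs_nonneg _)

theorem mem_Icc_of_mul_nrm_le_minOnIcc {u : ℝ → ℝ} {c ρ t : ℝ} (hc : 0 < c)
    (hu : ContinuousOn u (Icc 0 1)) (hcone : c * nrm u ≤ minOnIcc u 0 1)
    (hmin : minOnIcc u 0 1 = ρ) (ht : t ∈ Icc (0:ℝ) 1) : u t ∈ Icc ρ (ρ / c) := by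
  refine ⟨hmin ▸ minOnIcc_le_of_continuousOn hu ht, (le_div_iff₀ hc).2 ?_⟩
  calc u t * c ≤ nrm u * c :=
        mul_le_mul_of_nonneg_right ((le_abs_self _).trans (abs_le_nrm_of_continuousOn hu ht)) hc.le
    _ ≤ ρ := by linarith

theorem pos_of_one_lt_mul_sInf {S : Set ℝ} {V : ℝ → ℝ} {b : ℝ} (hV : ∀ t ∈ S, 0 ≤ V t)
    (hb : 1 < b * sInf (V '' S)) : 0 < b :=
  pos_of_mul_pos_left (one_pos.trans hb) (Real.sInf_nonneg (forall_mem_image.2 hV))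

theorem lt_minOnIcc_of_one_lt_mul_sInf {V u : ℝ → ℝ} {b ρ : ℝ} (hρ : 0 < ρ)
    (hV : ∀ t ∈ Icc (0:ℝ) 1, 0 ≤ V t) (hb : 1 < b * sInf (V '' Icc 0 1))
    (hu : ∀ t ∈ Icc (0:ℝ) 1, b * ρ * V t ≤ u t) : ρ < minOnIcc u 0 1 := by
  have hbρ : 0 ≤ b * ρ := mul_nonneg (pos_of_one_lt_mul_sInf hV hb).le hρ.le
  calc ρ < ρ * (b * sInf (V '' Icc 0 1)) := lt_mul_of_one_lt_right hρ hb
    _ ≤ minOnIcc u 0 1 := le_minOnIcc zero_le_one fun t ht =>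
      calc ρ * (b * sInf (V '' Icc 0 1)) = b * ρ * sInf (V '' Icc 0 1) := by ring
        _ ≤ b * ρ * V t := mul_le_mul_of_nonneg_left
            (csInf_le ⟨0, forall_mem_image.2 hV⟩ (mem_image_of_mem V ht)) hbρ
        _ ≤ u t := hu t ht

theorem aemeasurable_comp_of_caratheodory {α : Type*} [MeasurableSpace α] {μ : Measure α}
    {f : α → ℝ → ℝ} {u : α → ℝ} (hf_meas : ∀ v, Measurable fun t => f t v)
    (hf_cont : ∀ᵐ t ∂μ, ContinuousOn (f t) (Ici 0)) (hu : AEMeasurable u μ)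
    (hu_nonneg : ∀ᵐ t ∂μ, 0 ≤ u t) : AEMeasurable (fun t => f t (u t)) μ := by
  -- Zero `f` off a measurable set of full measure where it is continuous and clamp its argument
  -- to `[0, ∞)`: the result is continuous in `v` for every `t`, hence jointly measurable.
  obtain ⟨E, hE_ae, hE_meas, hE_cont⟩ := hf_cont.exists_measurable_mem
  set w : ℝ → α → ℝ := fun v => E.indicator fun t => f t (max v 0)
  have hw : Measurable (uncurry w) := by
    refine measurable_uncurry_of_continuous_of_measurable (fun t => ?_)
      fun v => (hf_meas _).indicator hE_meas
    by_cases ht : t ∈ E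
    · simp only [w, indicator_of_mem ht]
      exact (hE_cont t ht).comp_continuous (continuous_id.max continuous_const)
        fun v => le_max_right v 0
    · simp only [w, indicator_of_notMem ht]
      exact continuous_const
  refine (hw.comp_aemeasurable (hu.prodMk aemeasurable_id)).congr ?_
  filter_upwards [hE_ae, hu_nonneg] with t ht hut
  simp [w, ht, max_eq_left hut]

theorem ContinuousOn.integrable_of_ae_mem {μ : Measure ℝ} [IsFiniteMeasure μ] {γ : ℝ → ℝ}
    {a b : ℝ} (hγ : ContinuousOn γ (Icc a b)) (hμ : ∀ᵐ t ∂μ, t ∈ Icc a b) : Integrable γ μ := by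
  rw [← Measure.restrict_eq_self_of_ae_mem hμ]
  exact hγ.integrableOn_Icc

theorem intervalIntegral_eq_integral_Icc {F : ℝ → ℝ} {a b : ℝ} (hab : a ≤ b) :
    ∫ s in a..b, F s = ∫ s in Icc a b, F s := by
  rw [intervalIntegral.integral_of_le hab, integral_Icc_eq_integral_Ioc]

theorem mul_integral_le_integral_mul_mul {Y : Type*} [MeasurableSpace Y] {ν : Measure Y}
    {w g F : Y → ℝ} {a : ℝ} (ha : 0 ≤ a) (hw : ∀ᵐ s ∂ν, 0 ≤ w s) (hg : ∀ᵐ s ∂ν, 0 ≤ g s)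
    (haF : ∀ᵐ s ∂ν, a ≤ F s) (hint : Integrable (fun s => w s * (g s * F s)) ν) :
    a * ∫ s, w s * g s ∂ν ≤ ∫ s, w s * (g s * F s) ∂ν := by
  rw [← integral_const_mul]
  refine integral_mono_of_nonneg ?_ hint ?_
  · filter_upwards [hw, hg] with s hws hgs
    positivity
  · filter_upwards [hw, hg, haF] with s hws hgs haFs
    calc a * (w s * g s) = w s * g s * a := by ring
      _ ≤ w s * g s * F s := mul_le_mul_of_nonneg_left haFs (mul_nonneg hws hgs)
      _ = w s * (g s * F s) := by ring

section KernelIntegral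

variable {X Y : Type*} [MeasurableSpace X] [MeasurableSpace Y] {μ : Measure X} {ν : Measure Y}
  {k : X → Y → ℝ} {G : Y → ℝ}

theorem integrable_kernel_mul_of_norm_le {B : Y → ℝ} (hk : Measurable (uncurry k))
    (hG : AEMeasurable G ν) (hB : Integrable B ν) {t : X}
    (hbound : ∀ᵐ s ∂ν, ‖k t s * G s‖ ≤ B s) : Integrable (fun s => k t s * G s) ν :=
  hB.mono' ((hk.comp measurable_prodMk_left).aemeasurable.mul hG).aestronglyMeasurable hbound

theorem integrable_prod_kernel_mul_of_norm_le [IsFiniteMeasure μ] [SFinite ν] {B : Y → ℝ}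
    (hk : Measurable (uncurry k)) (hG : AEMeasurable G ν) (hB : Integrable B ν)
    (hbound : ∀ᵐ t ∂μ, ∀ᵐ s ∂ν, ‖k t s * G s‖ ≤ B s) :
    Integrable (fun p : X × Y => k p.1 p.2 * G p.2) (μ.prod ν) := by
  have hmeas : AEStronglyMeasurable (fun p : X × Y => k p.1 p.2 * G p.2) (μ.prod ν) :=
    (hk.aemeasurable.mul
      (hG.comp_quasiMeasurePreserving Measure.quasiMeasurePreserving_snd)).aestronglyMeasurable
  refine (integrable_prod_iff hmeas).2 ⟨hbound.mono fun t ht =>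
    integrable_kernel_mul_of_norm_le hk hG hB ht, ?_⟩
  refine (integrable_const (∫ s, B s ∂ν)).mono' hmeas.norm.integral_prod_right' ?_
  filter_upwards [hbound] with t ht
  rw [Real.norm_eq_abs, abs_of_nonneg (integral_nonneg fun s => norm_nonneg _)]
  exact integral_mono_of_nonneg (Eventually.of_forall fun s => norm_nonneg _) hB ht

theorem integral_mul_add_integral_kernel_le [IsFiniteMeasure μ] [SFinite ν] {u γ : X → ℝ}
    {h lam : ℝ} (hF : Integrable (fun p : X × Y => k p.1 p.2 * G p.2) (μ.prod ν))
    (hγ : Integrable γ μ) (hlam : 0 ≤ lam)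
    (heq : ∀ᵐ t ∂μ, u t = γ t * h + ∫ s, k t s * G s ∂ν + lam) :
    (∫ t, γ t ∂μ) * h + ∫ s, (∫ t, k t s ∂μ) * G s ∂ν ≤ ∫ t, u t ∂μ := by
  have hI : Integrable (fun t => ∫ s, k t s * G s ∂ν) μ := hF.integral_prod_left
  have hswap : ∫ t, ∫ s, k t s * G s ∂ν ∂μ = ∫ s, (∫ t, k t s ∂μ) * G s ∂ν := by
    rw [integral_integral_swap (f := fun t s => k t s * G s) hF]
    simp only [integral_mul_const]
  have hsum : Integrable (fun t => γ t * h + ∫ s, k t s * G s ∂ν) μ := (hγ.mul_const h).add hI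
  rw [integral_congr_ae heq, integral_add hsum (integrable_const lam),
    integral_add (hγ.mul_const h) hI, integral_mul_const, hswap]
  have : 0 ≤ ∫ _, lam ∂μ := integral_nonneg fun _ => hlam
  linarith

theorem integrable_kernel_mul_caratheodory [IsFiniteMeasure μ] [SFinite ν] {S : Set X}
    {f : Y → ℝ → ℝ} {g Φ u : Y → ℝ} {r C : ℝ} (hμS : ∀ᵐ t ∂μ, t ∈ S)
    (hk_meas : Measurable (uncurry k)) (hk : ∀ᵐ s ∂ν, ∀ t ∈ S, 0 ≤ k t s)
    (hkΦ : ∀ t ∈ S, ∀ᵐ s ∂ν, k t s ≤ Φ s) (hg_meas : Measurable g) (hg : ∀ᵐ s ∂ν, 0 ≤ g s)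
    (hgΦ : Integrable (fun s => g s * Φ s) ν) (hf_meas : ∀ v, Measurable fun s => f s v)
    (hf_cont : ∀ᵐ s ∂ν, ContinuousOn (f s) (Ici 0)) (hf_nonneg : ∀ s v, 0 ≤ v → 0 ≤ f s v)
    (hf_bdd : ∀ᵐ s ∂ν, ∀ v ∈ Icc 0 r, f s v ≤ C) (hu : AEMeasurable u ν)
    (hu_range : ∀ᵐ s ∂ν, u s ∈ Icc 0 r) :
    Integrable (fun p : X × Y => k p.1 p.2 * (g p.2 * f p.2 (u p.2))) (μ.prod ν) ∧
      ∀ t ∈ S, Integrable (fun s => k t s * (g s * f s (u s))) ν := by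
  have hG : AEMeasurable (fun s => g s * f s (u s)) ν :=
    hg_meas.aemeasurable.mul <|
      aemeasurable_comp_of_caratheodory hf_meas hf_cont hu (hu_range.mono fun _ => And.left)
  have hB : Integrable (fun s => g s * Φ s * C) ν := hgΦ.mul_const C
  have hbound : ∀ t ∈ S, ∀ᵐ s ∂ν, ‖k t s * (g s * f s (u s))‖ ≤ g s * Φ s * C := by
    intro t ht
    filter_upwards [hk, hkΦ t ht, hg, hf_bdd, hu_range] with s hks hkΦs hgs hfs hus
    have hfus : 0 ≤ f s (u s) ∧ f s (u s) ≤ C := ⟨hf_nonneg s _ hus.1, hfs _ hus⟩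
    rw [Real.norm_eq_abs, abs_of_nonneg (mul_nonneg (hks t ht) (mul_nonneg hgs hfus.1))]
    calc k t s * (g s * f s (u s)) ≤ Φ s * (g s * C) :=
          mul_le_mul hkΦs (mul_le_mul_of_nonneg_left hfus.2 hgs) (mul_nonneg hgs hfus.1)
            ((hks t ht).trans hkΦs)
      _ = g s * Φ s * C := by ring
  exact ⟨integrable_prod_kernel_mul_of_norm_le hk_meas hG hB (hμS.mono hbound),
    fun t ht => integrable_kernel_mul_of_norm_le hk_meas hG hB (hbound t ht)⟩

end KernelIntegral

/-- The function of `t` whose infimum over `[0,1]` appears in condition (I⁰_ρ), for the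
measure `μ = dA^ρ`; `∫ t', k t' s ∂μ` is the paper's `𝒦^ρ(s)`. -/
noncomputable def lowerProfile {X Y : Type*} [MeasurableSpace X] [MeasurableSpace Y]
    (μ : Measure X) (ν : Measure Y) (k : X → Y → ℝ) (g : Y → ℝ) (γ : X → ℝ) (t : X) : ℝ :=
  γ t / (1 - ∫ t', γ t' ∂μ) * ∫ s, (∫ t', k t' s ∂μ) * g s ∂ν + ∫ s, k t s * g s ∂ν

section Profile

variable {X Y : Type*} [MeasurableSpace X] [MeasurableSpace Y] {μ : Measure X} {ν : Measure Y}
  {k : X → Y → ℝ} {g F : Y → ℝ} {γ : X → ℝ} {S : Set X}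

theorem integral_kernel_nonneg (hμS : ∀ᵐ t ∂μ, t ∈ S) (hk : ∀ᵐ s ∂ν, ∀ t ∈ S, 0 ≤ k t s) :
    ∀ᵐ s ∂ν, 0 ≤ ∫ t, k t s ∂μ :=
  hk.mono fun _ hs => integral_nonneg_of_ae (hμS.mono hs)

theorem lowerProfile_nonneg (hμS : ∀ᵐ t ∂μ, t ∈ S) (hk : ∀ᵐ s ∂ν, ∀ t ∈ S, 0 ≤ k t s)
    (hg : ∀ᵐ s ∂ν, 0 ≤ g s) (hγ : ∀ t ∈ S, 0 ≤ γ t) (hαγ : ∫ t, γ t ∂μ < 1) {t : X}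
    (ht : t ∈ S) : 0 ≤ lowerProfile μ ν k g γ t := by
  have hK : 0 ≤ ∫ s, (∫ t', k t' s ∂μ) * g s ∂ν := integral_nonneg_of_ae <| by
    filter_upwards [integral_kernel_nonneg hμS hk, hg] with s hKs hgs
    exact mul_nonneg hKs hgs
  have hkt : 0 ≤ ∫ s, k t s * g s ∂ν := integral_nonneg_of_ae <| by
    filter_upwards [hk, hg] with s hks hgs
    exact mul_nonneg (hks t ht) hgs
  exact add_nonneg (mul_nonneg (div_nonneg (hγ t ht) (sub_pos.2 hαγ).le) hK) hkt

theorem mul_lowerProfile_le [IsFiniteMeasure μ] [SFinite ν] {u : X → ℝ} {h lam a : ℝ}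
    (hμS : ∀ᵐ t ∂μ, t ∈ S) (hk : ∀ᵐ s ∂ν, ∀ t ∈ S, 0 ≤ k t s) (hg : ∀ᵐ s ∂ν, 0 ≤ g s)
    (hγ : Integrable γ μ) (hγ_nonneg : ∀ t ∈ S, 0 ≤ γ t) (hαγ : ∫ t, γ t ∂μ < 1)
    (hF : Integrable (fun p : X × Y => k p.1 p.2 * (g p.2 * F p.2)) (μ.prod ν))
    (hkt : ∀ t ∈ S, Integrable (fun s => k t s * (g s * F s)) ν)
    (ha : 0 ≤ a) (haF : ∀ᵐ s ∂ν, a ≤ F s) (hlam : 0 ≤ lam)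
    (heq : ∀ t ∈ S, u t = γ t * h + ∫ s, k t s * (g s * F s) ∂ν + lam)
    (hh : ∫ t, u t ∂μ ≤ h) {t : X} (ht : t ∈ S) : a * lowerProfile μ ν k g γ t ≤ u t := by
  have hα : 0 < 1 - ∫ t, γ t ∂μ := sub_pos.2 hαγ
  have hKG : ∫ s, (∫ t, k t s ∂μ) * (g s * F s) ∂ν ≤ (1 - ∫ t, γ t ∂μ) * h := by
    have := integral_mul_add_integral_kernel_le hF hγ hlam (hμS.mono heq)
    linarith
  have hKG_int : Integrable (fun s => (∫ t, k t s ∂μ) * (g s * F s)) ν := by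
    simpa only [integral_mul_const] using hF.integral_prod_right
  have hK_low :=
    mul_integral_le_integral_mul_mul ha (integral_kernel_nonneg hμS hk) hg haF hKG_int
  have hk_low := mul_integral_le_integral_mul_mul ha (hk.mono fun s hs => hs t ht) hg haF (hkt t ht)
  have hd : 0 ≤ γ t / (1 - ∫ t, γ t ∂μ) := div_nonneg (hγ_nonneg t ht) hα.le
  calc a * lowerProfile μ ν k g γ t
      = γ t / (1 - ∫ t, γ t ∂μ) * (a * ∫ s, (∫ t', k t' s ∂μ) * g s ∂ν)
        + a * ∫ s, k t s * g s ∂ν := by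
        rw [lowerProfile]; ring
    _ ≤ γ t / (1 - ∫ t, γ t ∂μ) * ((1 - ∫ t, γ t ∂μ) * h) + ∫ s, k t s * (g s * F s) ∂ν :=
        add_le_add (mul_le_mul_of_nonneg_left (hK_low.trans hKG) hd) hk_low
    _ = γ t * h + ∫ s, k t s * (g s * F s) ∂ν := by field_simp
    _ ≤ u t := by linarith [heq t ht]

end Profile

theorem stmt1_general
    (k : ℝ → ℝ → ℝ) (g : ℝ → ℝ) (f : ℝ → ℝ → ℝ) (Φ γ : ℝ → ℝ) (c₁ c₂ c : ℝ)
    (H : (ℝ → ℝ) → ℝ) (K : Set (ℝ → ℝ))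
    (hk_meas : Measurable (Function.uncurry k))
    (hk_pos : ∀ t ∈ Icc (0:ℝ) 1, ∀ s ∈ Icc (0:ℝ) 1, 0 < k t s)
    (hc₁ : c₁ ∈ Ioc (0:ℝ) 1)
    (hkΦ : ∀ t ∈ Icc (0:ℝ) 1, ∀ᵐ s ∂(volume.restrict (Icc (0:ℝ) 1)),
      c₁ * Φ s ≤ k t s ∧ k t s ≤ Φ s)
    (hg_meas : Measurable g)
    (hg_nonneg : ∀ᵐ s ∂(volume.restrict (Icc (0:ℝ) 1)), 0 ≤ g s)
    (hgΦ_int : IntegrableOn (fun s => g s * Φ s) (Icc (0:ℝ) 1))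
    (hf_meas : ∀ u : ℝ, Measurable (fun t => f t u))
    (hf_cont : ∀ᵐ t ∂(volume.restrict (Icc (0:ℝ) 1)), ContinuousOn (f t) (Ici 0))
    (hf_nonneg : ∀ t u : ℝ, 0 ≤ u → 0 ≤ f t u)
    (hf_bdd : ∀ r > 0, ∃ C, ∀ᵐ t ∂(volume.restrict (Icc (0:ℝ) 1)), ∀ u ∈ Icc (0:ℝ) r, f t u ≤ C)
    (hγ_cont : ContinuousOn γ (Icc (0:ℝ) 1))
    (hc₂ : c₂ ∈ Ioc (0:ℝ) 1)
    (hγ_low : ∀ t ∈ Icc (0:ℝ) 1, c₂ * nrm γ ≤ γ t)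
    (hc : c = min c₁ c₂)
    (hK : K = {u : ℝ → ℝ | ContinuousOn u (Icc (0:ℝ) 1) ∧ c * nrm u ≤ minOnIcc u 0 1})
    (ρ : ℝ) (hρ : 0 < ρ) (hI0 : CondI0 k g f γ H K c ρ) :
    ∀ u ∈ K, minOnIcc u 0 1 = ρ → ∀ lam : ℝ, 0 ≤ lam →
      ¬ (∀ t ∈ Icc (0:ℝ) 1, u t = Tham k g f γ H u t + lam) := by
  obtain ⟨μA, hμA, hμA_supp, hαγ, hHα, fb, hfb, hfbM⟩ := hI0
  intro u hu hmin lam hlam heq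
  obtain ⟨hu_cont, hu_cone⟩ : u ∈ {u : ℝ → ℝ | ContinuousOn u (Icc (0:ℝ) 1) ∧
    c * nrm u ≤ minOnIcc u 0 1} := hK ▸ hu
  set ν := volume.restrict (Icc (0:ℝ) 1)
  have hμS : ∀ᵐ t ∂μA, t ∈ Icc (0:ℝ) 1 := mem_ae_iff.2 hμA_supp
  have hs : ∀ᵐ s ∂ν, s ∈ Icc (0:ℝ) 1 := ae_restrict_mem measurableSet_Icc
  have hk : ∀ᵐ s ∂ν, ∀ t ∈ Icc (0:ℝ) 1, 0 ≤ k t s := hs.mono fun s hs t ht => (hk_pos t ht s hs).le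
  have hc_pos : 0 < c := hc ▸ lt_min hc₁.1 hc₂.1
  have hu_range : ∀ᵐ s ∂ν, u s ∈ Icc ρ (ρ / c) :=
    hs.mono fun s => mem_Icc_of_mul_nrm_le_minOnIcc hc_pos hu_cont hu_cone hmin
  have hγ : ∀ t ∈ Icc (0:ℝ) 1, 0 ≤ γ t :=
    fun t ht => (mul_nonneg hc₂.1.le (nrm_nonneg γ)).trans (hγ_low t ht)
  simp only [intervalIntegral_eq_integral_Icc zero_le_one] at hfbM
  change 1 < fb * sInf (lowerProfile μA ν k g γ '' Icc 0 1) at hfbM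
  have hV := fun t => lowerProfile_nonneg (t := t) hμS hk hg_nonneg hγ hαγ
  obtain ⟨C, hC⟩ := hf_bdd (ρ / c) (by positivity)
  obtain ⟨hF, hkt⟩ := integrable_kernel_mul_caratheodory hμS hk_meas hk
    (fun t ht => (hkΦ t ht).mono fun _ => And.right) hg_meas hg_nonneg hgΦ_int hf_meas hf_cont
    hf_nonneg hC (hu_cont.aemeasurable measurableSet_Icc)
    (hu_range.mono fun _ hus => ⟨hρ.le.trans hus.1, hus.2⟩)
  refine (lt_minOnIcc_of_one_lt_mul_sInf hρ hV hfbM fun t ht => ?_).ne' hmin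
  refine mul_lowerProfile_le hμS hk hg_nonneg (hγ_cont.integrable_of_ae_mem hμS) hγ hαγ hF hkt
    (mul_nonneg (pos_of_one_lt_mul_sInf hV hfbM).le hρ.le)
    ((hfb.and hu_range).mono fun _ h => h.1 _ h.2.1 h.2.2) hlam (fun t ht => ?_) (hHα u hu hmin) ht
  rw [heq t ht, Tham, intervalIntegral_eq_integral_Icc zero_le_one]
  simp only [mul_assoc, ν]

theorem stmt1
    (k : ℝ → ℝ → ℝ) (g : ℝ → ℝ) (f : ℝ → ℝ → ℝ) (Φ γ : ℝ → ℝ) (c₁ c₂ c : ℝ)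
    (H : (ℝ → ℝ) → ℝ) (K : Set (ℝ → ℝ))
    (hk_meas : Measurable (Function.uncurry k))
    (hk_pos : ∀ t ∈ Icc (0:ℝ) 1, ∀ s ∈ Icc (0:ℝ) 1, 0 < k t s)
    (hk_cont : ∀ τ ∈ Icc (0:ℝ) 1, ∀ᵐ s ∂(volume.restrict (Icc (0:ℝ) 1)),
      Filter.Tendsto (fun t => |k t s - k τ s|) (nhdsWithin τ (Icc (0:ℝ) 1)) (nhds 0))
    (hΦ_meas : Measurable Φ)
    (hΦ_bdd : ∃ C, ∀ᵐ s ∂(volume.restrict (Icc (0:ℝ) 1)), |Φ s| ≤ C)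
    (hc₁ : c₁ ∈ Ioc (0:ℝ) 1)
    (hkΦ : ∀ t ∈ Icc (0:ℝ) 1, ∀ᵐ s ∂(volume.restrict (Icc (0:ℝ) 1)),
      c₁ * Φ s ≤ k t s ∧ k t s ≤ Φ s)
    (hg_meas : Measurable g)
    (hg_nonneg : ∀ᵐ s ∂(volume.restrict (Icc (0:ℝ) 1)), 0 ≤ g s)
    (hgΦ_int : IntegrableOn (fun s => g s * Φ s) (Icc (0:ℝ) 1))
    (hΦg_pos : 0 < ∫ s in (0:ℝ)..1, Φ s * g s)
    (hf_meas : ∀ u : ℝ, Measurable (fun t => f t u))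
    (hf_cont : ∀ᵐ t ∂(volume.restrict (Icc (0:ℝ) 1)), ContinuousOn (f t) (Ici 0))
    (hf_nonneg : ∀ t u : ℝ, 0 ≤ u → 0 ≤ f t u)
    (hf_bdd : ∀ r > 0, ∃ C, ∀ᵐ t ∂(volume.restrict (Icc (0:ℝ) 1)), ∀ u ∈ Icc (0:ℝ) r, f t u ≤ C)
    (hγ_cont : ContinuousOn γ (Icc (0:ℝ) 1))
    (hc₂ : c₂ ∈ Ioc (0:ℝ) 1)
    (hγ_low : ∀ t ∈ Icc (0:ℝ) 1, c₂ * nrm γ ≤ γ t)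
    (hc : c = min c₁ c₂)
    (hK : K = {u : ℝ → ℝ | ContinuousOn u (Icc (0:ℝ) 1) ∧ c * nrm u ≤ minOnIcc u 0 1})
    (hH_nonneg : ∀ u ∈ K, 0 ≤ H u)
    (hH_cont : ∀ u ∈ K, ∀ ε > 0, ∃ δ > 0, ∀ v ∈ K,
      nrm (fun t => u t - v t) < δ → |H u - H v| < ε)
    (hH_bdd : ∀ M : ℝ, ∃ M', ∀ u ∈ K, nrm u ≤ M → H u ≤ M')
    (ρ : ℝ) (hρ : 0 < ρ) (hI0 : CondI0 k g f γ H K c ρ) :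
    ∀ u ∈ K, minOnIcc u 0 1 = ρ → ∀ lam : ℝ, 0 ≤ lam →
      ¬ (∀ t ∈ Icc (0:ℝ) 1, u t = Tham k g f γ H u t + lam) :=
  stmt1_general k g f Φ γ c₁ c₂ c H K hk_meas hk_pos hc₁ hkΦ hg_meas hg_nonneg hgΦ_int hf_meas
    hf_cont hf_nonneg hf_bdd hγ_cont hc₂ hγ_low hc hK ρ hρ hI0
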